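/- (Kelly ruin threshold) For 1/2 < p < 1 there exists a unique γ₀ ∈ (2p-1, 1) with p·log(1+γ₀) + (1-p)·log(1-γ₀) = 0; moreover g(γ) < 0 for all γ ∈ (γ₀, 1) and g(γ) > 0 for all γ ∈ (0, γ₀). -/

import Mathlib

/-!
With `q = 1 - p`, `g' γ = (2p - 1 - γ) / ((1 + γ) (1 - γ))`, so `g` increases strictly on
`[0, 2p - 1]` and decreases strictly on `[2p - 1, 1)`, while `g 0 = 0` and `g γ → -∞` as
`γ → 1⁻`.
Hence `g > 0` on `(0, 2p - 1]`, and on `(2p - 1, 1)` the intermediate value theorem and strict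
monotonicity give exactly one zero `γ₀`, with `g > 0` before it and `g < 0` after it.
-/

open Real Set Filter Topology

noncomputable def kellyGrowth (p q γ : ℝ) : ℝ := p * log (1 + γ) + q * log (1 - γ)

section kellyGrowth

variable {p q : ℝ}

@[simp]
theorem kellyGrowth_zero : kellyGrowth p q 0 = 0 := by simp [kellyGrowth]

theorem hasDerivAt_kellyGrowth {x : ℝ} (hx : x ∈ Ioo (-1) 1) :
    HasDerivAt (kellyGrowth p q) (p / (1 + x) - q / (1 - x)) x := by
  have hplus : HasDerivAt (fun γ => log (1 + γ)) (1 / (1 + x)) x := by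
    simpa using ((hasDerivAt_id' x).const_add 1).log (by linarith [hx.1])
  have hminus : HasDerivAt (fun γ => log (1 - γ)) (-1 / (1 - x)) x := by
    simpa using ((hasDerivAt_id' x).const_sub 1).log (by linarith [hx.2])
  exact ((hplus.const_mul p).add (hminus.const_mul q)).congr_deriv (by ring)

theorem hasDerivAt_kellyGrowth_of_add_eq_one (hpq : p + q = 1) {x : ℝ} (hx : x ∈ Ioo (-1) 1) :
    HasDerivAt (kellyGrowth p q) ((p - q - x) / ((1 + x) * (1 - x))) x := by
  refine (hasDerivAt_kellyGrowth hx).congr_deriv ?_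
  have h1 : 1 + x ≠ 0 := by linarith [hx.1]
  have h2 : 1 - x ≠ 0 := by linarith [hx.2]
  field_simp
  linear_combination (-x) * hpq

theorem continuousOn_kellyGrowth : ContinuousOn (kellyGrowth p q) (Ioo (-1) 1) :=
  fun _ hx => (hasDerivAt_kellyGrowth hx).continuousAt.continuousWithinAt

theorem strictMonoOn_kellyGrowth (hpq : p + q = 1) (hq : 0 < q) :
    StrictMonoOn (kellyGrowth p q) (Icc 0 (p - q)) := by
  have hsub : Icc 0 (p - q) ⊆ Ioo (-1) 1 := fun x hx =>
    ⟨by linarith [hx.1], by linarith [hx.2]⟩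
  refine strictMonoOn_of_deriv_pos (convex_Icc _ _) (continuousOn_kellyGrowth.mono hsub)
    fun x hx => ?_
  rw [interior_Icc] at hx
  have hx' := hsub (Ioo_subset_Icc_self hx)
  rw [(hasDerivAt_kellyGrowth_of_add_eq_one hpq hx').deriv]
  exact div_pos (by linarith [hx.2]) (mul_pos (by linarith [hx'.1]) (by linarith [hx'.2]))

theorem strictAntiOn_kellyGrowth (hpq : p + q = 1) (hp : 0 < p) :
    StrictAntiOn (kellyGrowth p q) (Ico (p - q) 1) := by
  have hsub : Ico (p - q) 1 ⊆ Ioo (-1) 1 := fun x hx => ⟨by linarith [hx.1], hx.2⟩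
  refine strictAntiOn_of_deriv_neg (convex_Ico _ _) (continuousOn_kellyGrowth.mono hsub)
    fun x hx => ?_
  rw [interior_Ico] at hx
  have hx' := hsub (Ioo_subset_Ico_self hx)
  rw [(hasDerivAt_kellyGrowth_of_add_eq_one hpq hx').deriv]
  exact div_neg_of_neg_of_pos (by linarith [hx.1])
    (mul_pos (by linarith [hx'.1]) (by linarith [hx'.2]))

theorem kellyGrowth_pos (hpq : p + q = 1) (hq : 0 < q) {γ : ℝ} (hγ : γ ∈ Ioc 0 (p - q)) :
    0 < kellyGrowth p q γ := by
  simpa using strictMonoOn_kellyGrowth hpq hq (left_mem_Icc.2 (hγ.1.le.trans hγ.2))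
    (Ioc_subset_Icc_self hγ) hγ.1

theorem tendsto_kellyGrowth_nhdsLT_one (hq : 0 < q) :
    Tendsto (kellyGrowth p q) (𝓝[<] 1) atBot := by
  have hgap : Tendsto (fun γ : ℝ => 1 - γ) (𝓝[<] 1) (𝓝[>] 0) :=
    tendsto_nhdsWithin_of_tendsto_nhds_of_eventually_within _
      (by simpa using ((continuous_sub_left (1 : ℝ)).tendsto 1).mono_left nhdsWithin_le_nhds)
      (eventually_nhdsWithin_of_forall fun _ hγ => sub_pos.2 (mem_Iio.1 hγ))
  have hplus : Tendsto (fun γ : ℝ => p * log (1 + γ)) (𝓝[<] 1) (𝓝 (p * log 2)) := by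
    have : ContinuousAt (fun γ : ℝ => p * log (1 + γ)) 1 := by
      fun_prop (disch := norm_num)
    simpa [one_add_one_eq_two] using this.tendsto.mono_left nhdsWithin_le_nhds
  exact hplus.add_atBot ((tendsto_log_nhdsGT_zero.comp hgap).const_mul_atBot hq)

theorem exists_mem_Ioo_kellyGrowth_neg (hq : 0 < q) {a : ℝ} (ha : a < 1) :
    ∃ γ ∈ Ioo a 1, kellyGrowth p q γ < 0 :=
  ((eventually_mem_set.2 (Ioo_mem_nhdsLT ha)).and
    ((tendsto_kellyGrowth_nhdsLT_one hq).eventually (eventually_lt_atBot 0))).exists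

end kellyGrowth

theorem kelly_ruin_threshold (p : ℝ) (hp : 1 / 2 < p) (hp1 : p < 1) (q : ℝ) (hq : q = 1 - p) :
    let g : ℝ → ℝ := fun γ => p * Real.log (1 + γ) + q * Real.log (1 - γ)
    ∃ γ₀ ∈ Set.Ioo (2 * p - 1) 1, g γ₀ = 0 ∧
      (∀ γ' ∈ Set.Ioo (2 * p - 1) 1, g γ' = 0 → γ' = γ₀) ∧
      (∀ γ ∈ Set.Ioo γ₀ 1, g γ < 0) ∧
      (∀ γ ∈ Set.Ioo 0 γ₀, 0 < g γ) := by
  intro g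
  have hpq : p + q = 1 := by linarith
  have hq0 : 0 < q := by linarith
  have hk : p - q = 2 * p - 1 := by linarith
  have hanti := strictAntiOn_kellyGrowth hpq (by linarith)
  have hpos := @kellyGrowth_pos p q hpq hq0
  rw [hk] at hanti hpos
  obtain ⟨γ₁, hγ₁, hneg⟩ :=
    exists_mem_Ioo_kellyGrowth_neg (p := p) hq0 (by linarith : 2 * p - 1 < 1)
  obtain ⟨γ₀, hγ₀, hzero⟩ := intermediate_value_Ioo' hγ₁.1.le
    (continuousOn_kellyGrowth.mono fun _ hx => ⟨by linarith [hx.1], hx.2.trans_lt hγ₁.2⟩)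
    ⟨hneg, hpos ⟨by linarith, le_rfl⟩⟩
  have hγ₀' : γ₀ ∈ Ico (2 * p - 1) 1 := ⟨hγ₀.1.le, hγ₀.2.trans hγ₁.2⟩
  refine ⟨γ₀, ⟨hγ₀.1, hγ₀'.2⟩, hzero, ?_, ?_, ?_⟩
  · exact fun γ hγ h => hanti.injOn (Ioo_subset_Ico_self hγ) hγ₀' (h.trans hzero.symm)
  · exact fun γ hγ => hzero ▸ hanti hγ₀' ⟨hγ₀'.1.trans hγ.1.le, hγ.2⟩ hγ.1
  · intro γ hγ
    rcases le_or_gt γ (2 * p - 1) with hle | hgt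
    · exact hpos ⟨hγ.1, hle⟩
    · exact hzero ▸ hanti ⟨hgt.le, hγ.2.trans hγ₀'.2⟩ hγ₀' hγ.2
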